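/- The group of n-th powers P_n(ℚ_p^*) is an open subgroup of the topological group ℚ_p^*. -/

import Mathlib

theorem padic_nth_powers_open (p : ℕ) [Fact p.Prime] (n : ℕ) (hn : 0 < n) :
    IsOpen {x : ℚ_[p] | ∃ y : ℚ_[p], y ≠ 0 ∧ x = y ^ n} := by
  rw [isOpen_iff_mem_nhds]
  rintro x ⟨y, hy, rfl⟩
  have hx : (y : ℚ_[p]) ^ n ≠ 0 := pow_ne_zero _ hy
  have hnn : ((n : ℚ_[p])) ≠ 0 := Nat.cast_ne_zero.mpr hn.ne'
  have hn0 : (0:ℝ) < ‖(n : ℚ_[p])‖ := norm_pos_iff.mpr hnn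
  have hx0 : (0:ℝ) < ‖y ^ n‖ := norm_pos_iff.mpr hx
  have hnpos : (0:ℝ) < ‖(n : ℚ_[p])‖ ^ 2 * ‖y ^ n‖ := by positivity
  filter_upwards [Metric.ball_mem_nhds _ hnpos] with z hz
  rw [Metric.mem_ball, dist_eq_norm] at hz
  -- w = z / y^n, close to 1
  set w : ℚ_[p] := z / y ^ n with hw
  have hw1 : ‖w - 1‖ < ‖(n : ℚ_[p])‖ ^ 2 := by
    have : w - 1 = (z - y ^ n) / y ^ n := by rw [hw, div_sub_one hx]
    rw [this, norm_div, div_lt_iff₀ hx0]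
    exact hz
  have hnle : ‖(n : ℚ_[p])‖ ≤ 1 := by
    simpa using Padic.norm_int_le_one (p := p) (n : ℤ)
  have hwlt1 : ‖w - 1‖ < 1 := lt_of_lt_of_le hw1 (by nlinarith)
  have hwnorm : ‖w‖ = 1 := by
    have hne : ‖(1:ℚ_[p])‖ ≠ ‖w - 1‖ := by rw [norm_one]; exact hwlt1.ne'
    have : ‖(1:ℚ_[p]) + (w - 1)‖ = max ‖(1:ℚ_[p])‖ ‖w - 1‖ := Padic.add_eq_max_of_ne hne
    rw [norm_one] at this
    simpa [max_eq_left hwlt1.le] using this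
  have hwne : w ≠ 0 := by
    intro h; rw [h, norm_zero] at hwnorm; norm_num at hwnorm
  -- lift to ℤ_p
  set W : ℤ_[p] := ⟨w, le_of_eq hwnorm⟩ with hW
  set F : Polynomial ℤ_[p] := Polynomial.X ^ n - Polynomial.C W with hF
  have heval1 : F.eval 1 = 1 - W := by simp [hF]
  have hderiv : F.derivative.eval 1 = (n : ℤ_[p]) := by
    simp [hF, Polynomial.derivative_pow]
  have hcond : ‖F.eval 1‖ < ‖F.derivative.eval 1‖ ^ 2 := by
    rw [heval1, hderiv]
    have e1 : ‖(1 - W : ℤ_[p])‖ = ‖w - 1‖ := by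
      rw [← norm_neg, PadicInt.norm_def]
      push_cast [hW]
      congr 1
      change -(((1 - W : ℤ_[p])) : ℚ_[p]) = w - 1
      rw [PadicInt.coe_sub, PadicInt.coe_one]
      show -(1 - w) = w - 1
      ring
    have e2 : ‖(n : ℤ_[p])‖ = ‖(n : ℚ_[p])‖ := by
      rw [PadicInt.norm_def]; push_cast; rfl
    rw [e1, e2]; exact hw1
  obtain ⟨t, ht, -, -, -⟩ := hensels_lemma hcond
  have htn : t ^ n = W := by
    have := ht
    simp [hF, sub_eq_zero] at this
    exact this
  have htne : (t : ℚ_[p]) ≠ 0 := by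
    intro h
    have : (W : ℚ_[p]) = 0 := by
      rw [← htn]; push_cast [h]; simp [zero_pow hn.ne']
    exact hwne this
  refine ⟨y * (t : ℚ_[p]), mul_ne_zero hy htne, ?_⟩
  have : ((t:ℚ_[p])) ^ n = w := by
    have := congrArg (fun u : ℤ_[p] => (u : ℚ_[p])) htn
    push_cast at this
    exact this
  rw [mul_pow, this, hw]
  field_simp
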